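/- Let f be a continuous automorphism of a compact abelian topological group G with the shadowing property. Then the non-wandering set equals the chain recurrent set: Ω(f) = CR(f). -/

import Mathlib

/-!
If every neighbourhood of `x` contains a point whose orbit returns to it, then jumping from `x`
onto that orbit and, on its return, back to `x` closes an `E`-chain; so `Ω(f) ⊆ CR(f)` for every
continuous `f`. Conversely, extending an `E`-chain from `x` to `x` by the true orbit of `x` gives
a pseudo-orbit; a point shadowing it starts near `x` and returns near `x`, so `CR(f) ⊆ Ω(f)` under
shadowing.
-/

/-- `f` has the shadowing property. -/
def HasShadowingProperty {G : Type*} [Group G] [TopologicalSpace G] (f : G → G) : Prop :=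
  ∀ E ∈ nhds (1 : G), ∃ D ∈ nhds (1 : G),
    ∀ x : ℕ → G, (∀ k : ℕ, f (x k) * (x (k + 1))⁻¹ ∈ D) →
      ∃ y : G, ∀ k : ℕ, f^[k] y * (x k)⁻¹ ∈ E

/-- The non-wandering set of `f`. -/
def nonwanderingSet {G : Type*} [TopologicalSpace G] (f : G → G) : Set G :=
  {x : G | ∀ U : Set G, IsOpen U → x ∈ U →
    ∃ n : ℕ, 1 ≤ n ∧ ((f^[n] '' U) ∩ U).Nonempty}

/-- The chain recurrent set of `f`. -/
def chainRecurrentSet {G : Type*} [Group G] [TopologicalSpace G] (f : G → G) : Set G :=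
  {x : G | ∀ E ∈ nhds (1 : G), ∃ n : ℕ, 1 ≤ n ∧ ∃ c : ℕ → G, c 0 = x ∧ c n = x ∧
    ∀ i < n, f (c i) * (c (i + 1))⁻¹ ∈ E}

open Filter Topology Pointwise

section

variable {G : Type*} [Group G] {f : G → G}

theorem exists_chain_of_near_return {x z : G} {V : Set G} {n : ℕ} (hV : (1 : G) ∈ V)
    (hstart : f x * (f z)⁻¹ ∈ V) (hend : f^[n] z * x⁻¹ ∈ V) :
    ∃ c : ℕ → G, c 0 = x ∧ c n = x ∧ ∀ i < n, f (c i) * (c (i + 1))⁻¹ ∈ V * V := by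
  refine ⟨fun i => if i = 0 ∨ i = n then x else f^[i] z, by simp, by simp, fun i hi => ?_⟩
  set c : ℕ → G := fun i => if i = 0 ∨ i = n then x else f^[i] z
  -- The error of step `i` factors through `f^[i + 1] z`; the first factor is `1` unless `i = 0`,
  -- the second unless `i + 1 = n`.
  have hleave : f (c i) * (f^[i + 1] z)⁻¹ ∈ V := by
    rcases eq_or_ne i 0 with rfl | hi0
    · simpa [c] using hstart
    · simpa [c, hi0, hi.ne, Function.iterate_succ_apply'] using hV
  have harrive : f^[i + 1] z * (c (i + 1))⁻¹ ∈ V := by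
    rcases eq_or_ne (i + 1) n with hin | hin
    · simpa [c, hin] using hend
    · simpa [c, hin] using hV
  simpa [mul_assoc] using Set.mul_mem_mul hleave harrive

variable [TopologicalSpace G]

theorem HasShadowingProperty.exists_shadow_of_chain (hsh : HasShadowingProperty f) {E : Set G} (hE : E ∈ 𝓝 1) :
    ∃ D ∈ 𝓝 (1 : G), ∀ (n : ℕ) (c : ℕ → G), (∀ i < n, f (c i) * (c (i + 1))⁻¹ ∈ D) →
      ∃ y, ∀ k ≤ n, f^[k] y * (c k)⁻¹ ∈ E := by
  obtain ⟨D, hD, hshadow⟩ := hsh E hE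
  refine ⟨D, hD, fun n c hc => ?_⟩
  set s : ℕ → G := fun k => if k < n then c k else f^[k - n] (c n)
  have hs : ∀ k ≤ n, s k = c k := by
    intro k hk
    rcases hk.lt_or_eq with hk | rfl
    · simp [s, hk]
    · simp [s]
  have hpseudo : ∀ k, f (s k) * (s (k + 1))⁻¹ ∈ D := by
    intro k
    rcases lt_or_ge k n with hk | hk
    · rw [hs k hk.le, hs (k + 1) hk]
      exact hc k hk
    · have hk' : ¬k + 1 < n := by omega
      simpa [s, hk.not_gt, hk', Nat.sub_add_comm hk, Function.iterate_succ_apply']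
        using mem_of_mem_nhds hD
  obtain ⟨y, hy⟩ := hshadow s hpseudo
  exact ⟨y, fun k hk => hs k hk ▸ hy k⟩

variable [IsTopologicalGroup G]

theorem nonwanderingSet_subset_chainRecurrentSet (hf : Continuous f) :
    nonwanderingSet f ⊆ chainRecurrentSet f := by
  intro x hx E hE
  obtain ⟨V, hV, hVE⟩ := exists_nhds_one_split hE
  have hnear : {z | f x * (f z)⁻¹ ∈ V ∧ z * x⁻¹ ∈ V} ∈ 𝓝 x := by
    have hstart : Tendsto (fun z => f x * (f z)⁻¹) (𝓝 x) (𝓝 1) :=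
      (continuous_const.mul (continuous_inv.comp hf)).tendsto' x 1 (mul_inv_cancel _)
    have hreturn : Tendsto (· * x⁻¹) (𝓝 x) (𝓝 1) :=
      (continuous_mul_const x⁻¹).tendsto' x 1 (mul_inv_cancel x)
    exact inter_mem (hstart hV) (hreturn hV)
  obtain ⟨U, hUnear, hUo, hxU⟩ := mem_nhds_iff.mp hnear
  obtain ⟨n, hn, _, ⟨z, hzU, rfl⟩, hzn⟩ := hx U hUo hxU
  obtain ⟨c, hc0, hcn, hc⟩ :=
    exists_chain_of_near_return (mem_of_mem_nhds hV) (hUnear hzU).1 (hUnear hzn).2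
  exact ⟨n, hn, c, hc0, hcn, fun i hi => Set.mul_subset_iff.mpr hVE (hc i hi)⟩

theorem chainRecurrentSet_subset_nonwanderingSet (hsh : HasShadowingProperty f) :
    chainRecurrentSet f ⊆ nonwanderingSet f := by
  intro x hx U hUo hxU
  have hE : (· * x) ⁻¹' U ∈ 𝓝 (1 : G) :=
    (continuous_mul_const x).continuousAt.preimage_mem_nhds (by simpa using hUo.mem_nhds hxU)
  obtain ⟨D, hD, hshadow⟩ := hsh.exists_shadow_of_chain hE
  obtain ⟨n, hn, c, hc0, hcn, hc⟩ := hx D hD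
  obtain ⟨y, hy⟩ := hshadow n c hc
  have hy0 : y ∈ U := by simpa [hc0] using hy 0 n.zero_le
  have hyn : f^[n] y ∈ U := by simpa [hcn] using hy n le_rfl
  exact ⟨n, hn, f^[n] y, ⟨y, hy0, rfl⟩, hyn⟩

end

theorem nonwandering_eq_chainRecurrent_general {G : Type*} [CommGroup G] [TopologicalSpace G]
    [IsTopologicalGroup G] (f : G ≃* G) (hf : Continuous f)
    (hsh : HasShadowingProperty ⇑f) :
    nonwanderingSet ⇑f = chainRecurrentSet ⇑f :=
  Set.Subset.antisymm (nonwanderingSet_subset_chainRecurrentSet hf)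
    (chainRecurrentSet_subset_nonwanderingSet hsh)

/-- For a continuous automorphism of a compact abelian topological group with the
shadowing property, the non-wandering set equals the chain recurrent set. -/
theorem nonwandering_eq_chainRecurrent {G : Type*} [CommGroup G] [TopologicalSpace G]
    [IsTopologicalGroup G] [CompactSpace G] (f : G ≃* G) (hf : Continuous f)
    (hsh : HasShadowingProperty ⇑f) :
    nonwanderingSet ⇑f = chainRecurrentSet ⇑f :=
  nonwandering_eq_chainRecurrent_general f hf hsh
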